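/- Let n ∈ ℕ, σ∨ = ℚ^{n+1}_{≥0}, and P an integral σ∨-polyhedron contained in σ∨. Then P is normal if and only if (sP) ∩ ℤ^{n+1} = E_{[s,P]} for all s ∈ {1, …, n}. In other words, checking the normality condition for the first n dilates suffices. -/

import Mathlib

/-!
Write `P = conv F + ℚ^{n+1}_{≥0}` with `F` a finite set of lattice points. By induction on `s` it
suffices to show that for `s ≥ n + 1` every lattice point `m ∈ (s + 1)P` splits as `m = x + m'`
with `x` a lattice point of `P` and `m' ∈ sP`.

Homogenize: `(s + 1, m)` lies in the cone spanned by the vectors `(1, f)`, `f ∈ F`, and `(0, eᵢ)`.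
By the conic Carathéodory theorem it is a nonnegative combination of linearly independent such
vectors. If some `(1, f)` has coefficient `≥ 1`, take `x = f`. Otherwise more than `s + 1 ≥ n + 1`
of the `(1, f)` occur among at most `n + 2` independent vectors, so `s = n` and `m = ∑ cⱼ vⱼ`
over the `n + 2` vertices of a lattice simplex, with `∑ cⱼ = n + 1` and all `cⱼ < 1`. Then
`u = ∑ vⱼ - m = ∑ (1 - cⱼ) vⱼ` is a lattice point of that simplex, and replacing the vertex with
the smallest coefficient by `u` yields a representation of the same kind over a simplex whose
normalized volume `|det|` is smaller by the factor `1 - c_min`. These volumes are positive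
integers, so after finitely many steps some coefficient is `≥ 1`.
-/

open scoped Pointwise
open Finset

namespace Paper

/-- Standard pairing on `ℚⁿ`. -/
def dot {n : ℕ} (m v : Fin n → ℚ) : ℚ := ∑ i, m i * v i

/-- Dual cone `σ∨ = {m | ∀ v ∈ σ, ⟨m,v⟩ ≥ 0}`. -/
def dualCone {n : ℕ} (σ : Set (Fin n → ℚ)) : Set (Fin n → ℚ) :=
  {m | ∀ v ∈ σ, 0 ≤ dot m v}

/-- A polyhedral cone: the cone generated by finitely many vectors. -/
def IsPolyhedralCone {n : ℕ} (σ : Set (Fin n → ℚ)) : Prop :=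
  ∃ (k : ℕ) (g : Fin k → Fin n → ℚ),
    σ = {v | ∃ c : Fin k → ℚ, (∀ i, 0 ≤ c i) ∧ v = ∑ i, c i • g i}

/-- A pointed (strongly convex) cone contains no line. -/
def Pointed {n : ℕ} (σ : Set (Fin n → ℚ)) : Prop := ∀ v ∈ σ, -v ∈ σ → v = 0

/-- The canonical embedding `ℤⁿ → ℚⁿ`. -/
def Lq {n : ℕ} (m : Fin n → ℤ) : Fin n → ℚ := fun i => (m i : ℚ)

/-- A rational vector is a lattice point if all coordinates are integers. -/
def IsLatticePt {n : ℕ} (v : Fin n → ℚ) : Prop := ∀ i, ∃ z : ℤ, v i = (z : ℚ)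

/-- A `σ`-polyhedron: Minkowski sum of a (nonempty) polytope with the cone `σ`. -/
def IsSigmaPolyhedron {n : ℕ} (σ Δ : Set (Fin n → ℚ)) : Prop :=
  ∃ F : Finset (Fin n → ℚ), F.Nonempty ∧ Δ = convexHull ℚ (↑F : Set (Fin n → ℚ)) + σ

/-- An integral `σv`-polyhedron: Minkowski sum of a lattice polytope with `σv`. -/
def IsIntegralPoly {n : ℕ} (σv P : Set (Fin n → ℚ)) : Prop :=
  ∃ F : Finset (Fin n → ℤ), F.Nonempty ∧ P = convexHull ℚ (Lq '' (↑F : Set (Fin n → ℤ))) + σv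

/-- The `e`-fold Minkowski sum `eP` of `P`, with the convention `0P = σv`. -/
def mink {n : ℕ} (σv P : Set (Fin n → ℚ)) : ℕ → Set (Fin n → ℚ)
  | 0 => σv
  | 1 => P
  | (e + 2) => mink σv P (e + 1) + P

/-- The semigroup `σ∨ ∩ ℤⁿ` of lattice points of the dual cone. -/
def latticeDual {n : ℕ} (σ : Set (Fin n → ℚ)) : AddSubmonoid (Fin n → ℤ) where
  carrier := {m | Lq m ∈ dualCone σ}
  zero_mem' := by
    intro v hv
    simp [dot, Lq]
  add_mem' := by
    intro a b ha hb v hv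
    have h1 := ha v hv
    have h2 := hb v hv
    have h : dot (Lq (a + b)) v = dot (Lq a) v + dot (Lq b) v := by
      simp only [dot, Lq, Pi.add_apply]
      rw [← Finset.sum_add_distrib]
      apply Finset.sum_congr rfl
      intro i _
      push_cast
      ring
    rw [Set.mem_setOf_eq] at *
    simpa [dualCone, h] using add_nonneg h1 h2

/-- The monomial `χ^m` in the semigroup algebra `k[σ∨ ∩ ℤⁿ]`. -/
noncomputable def mono (k : Type*) [CommRing k] {n : ℕ} (σ : Set (Fin n → ℚ))
    (m : latticeDual σ) : AddMonoidAlgebra k (latticeDual σ) :=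
  AddMonoidAlgebra.single m 1

/-- The monomial ideal `I[P]` generated by the monomials `χ^m`, `m ∈ P ∩ ℤⁿ`. -/
noncomputable def idealOf (k : Type*) [CommRing k] {n : ℕ} (σ : Set (Fin n → ℚ))
    (P : Set (Fin n → ℚ)) : Ideal (AddMonoidAlgebra k (latticeDual σ)) :=
  Ideal.span {f | ∃ m : latticeDual σ, Lq (m : Fin n → ℤ) ∈ P ∧ f = mono k σ m}

/-- `a` satisfies an equation of integral dependence over the ideal `I`:
`a^r + λ₁ a^(r-1) + ⋯ + λ_r = 0` with `λᵢ ∈ Iⁱ`. -/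
def IntegralOverIdeal {A : Type*} [CommRing A] (I : Ideal A) (a : A) : Prop :=
  ∃ r : ℕ, 0 < r ∧ ∃ c : ℕ → A, (∀ i ∈ Finset.Icc 1 r, c i ∈ I ^ i) ∧
    a ^ r + ∑ i ∈ Finset.Icc 1 r, c i * a ^ (r - i) = 0

/-- A monomial (torus-homogeneous) ideal of `k[σ∨ ∩ ℤⁿ]`. -/
def IsMonomialIdeal (k : Type*) [CommRing k] {n : ℕ} (σ : Set (Fin n → ℚ))
    (I : Ideal (AddMonoidAlgebra k (latticeDual σ))) : Prop :=
  ∃ S : Set (latticeDual σ), I = Ideal.span {f | ∃ m ∈ S, f = mono k σ m}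

/-- The nonnegative orthant `ℚ^{n+1}_{≥0}`. -/
def orthant (n : ℕ) : Set (Fin (n + 1) → ℚ) := {v | ∀ i, 0 ≤ v i}

end Paper

section ConicCaratheodory

variable {𝕜 E ι : Type*} [Field 𝕜] [LinearOrder 𝕜] [IsStrictOrderedRing 𝕜]
  [AddCommGroup E] [Module 𝕜 E] [Fintype ι]

theorem exists_pos_relation_of_not_linearIndepOn (g : ι → E) {c : ι → 𝕜}
    (hdep : ¬LinearIndepOn 𝕜 g (Function.support c)) :
    ∃ b : ι → 𝕜, (∀ i, c i = 0 → b i = 0) ∧ ∑ i, b i • g i = 0 ∧ ∃ i, 0 < b i := by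
  classical
  rw [← Set.coe_toFinset (Function.support c), not_linearIndepOn_finset_iff] at hdep
  obtain ⟨a, hrel, i₁, hi₁, ha₁⟩ := hdep
  rw [Set.mem_toFinset, Function.mem_support] at hi₁
  set b : ι → 𝕜 := fun i => if c i = 0 then 0 else a i
  have hb : ∑ i, b i • g i = 0 := by
    rw [← hrel, ← Finset.sum_filter_of_ne (p := fun i => c i ≠ 0) (by simp +contextual [b])]
    exact Finset.sum_congr (by ext; simp) (by simp +contextual [b])
  have hb₁ : b i₁ ≠ 0 := by simpa [b, hi₁] using ha₁
  rcases hb₁.lt_or_gt with hneg | hpos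
  · exact ⟨-b, by simp +contextual [b], by simp [neg_smul, hb], i₁, by simpa using hneg⟩
  · exact ⟨b, by simp +contextual [b], hb, i₁, hpos⟩

theorem exists_support_ssubset_of_not_linearIndepOn (g : ι → E) {c : ι → 𝕜}
    (hc : ∀ i, 0 ≤ c i) (hdep : ¬LinearIndepOn 𝕜 g (Function.support c)) :
    ∃ c' : ι → 𝕜, (∀ i, 0 ≤ c' i) ∧ ∑ i, c' i • g i = ∑ i, c i • g i ∧
      Function.support c' ⊂ Function.support c := by
  obtain ⟨b, hbc, hb, i₂, hb₂⟩ := exists_pos_relation_of_not_linearIndepOn g hdep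
  obtain ⟨i₀, hi₀, hmin⟩ := Finset.exists_min_image (Finset.univ.filter fun i => 0 < b i)
    (fun i => c i / b i) ⟨i₂, by simpa using hb₂⟩
  have hb₀ : 0 < b i₀ := (Finset.mem_filter.1 hi₀).2
  set t := c i₀ / b i₀
  have ht : 0 ≤ t := div_nonneg (hc i₀) hb₀.le
  refine ⟨fun i => c i - t * b i, fun i => ?_, ?_, ?_⟩
  · rcases lt_or_ge 0 (b i) with hbi | hbi
    · have := hmin i (by simpa using hbi)
      rw [le_div_iff₀ hbi] at this
      linarith
    · nlinarith [hc i]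
  · simp only [sub_smul, Finset.sum_sub_distrib, mul_smul, ← Finset.smul_sum, hb, smul_zero,
      sub_zero]
  · refine Set.ssubset_iff_of_subset (fun i hi => ?_) |>.2 ⟨i₀, ?_, ?_⟩
    · intro hci
      simp [hci, hbc i hci] at hi
    · intro hci
      exact hb₀.ne' (hbc i₀ hci)
    · simp [t, div_mul_cancel₀ _ hb₀.ne']

theorem exists_nonneg_linearIndepOn_support (g : ι → E) (c : ι → 𝕜) (hc : ∀ i, 0 ≤ c i) :
    ∃ c' : ι → 𝕜, (∀ i, 0 ≤ c' i) ∧ ∑ i, c' i • g i = ∑ i, c i • g i ∧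
      LinearIndepOn 𝕜 g (Function.support c') := by
  induction hN : (Function.support c).ncard using Nat.strong_induction_on generalizing c with
  | _ N ih =>
    by_cases hind : LinearIndepOn 𝕜 g (Function.support c)
    · exact ⟨c, hc, rfl, hind⟩
    obtain ⟨c₁, hc₁, hsum₁, hsub⟩ := exists_support_ssubset_of_not_linearIndepOn g hc hind
    obtain ⟨c', hc', hsum', hind'⟩ :=
      ih _ (hN ▸ Set.ncard_lt_ncard hsub (Set.toFinite _)) c₁ hc₁ rfl
    exact ⟨c', hc', hsum'.trans hsum₁, hind'⟩

end ConicCaratheodory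

section FiniteCombinations

variable {𝕜 E ι : Type*}

theorem sum_sub_single_smul [Ring 𝕜] [AddCommGroup E] [Module 𝕜 E] [Fintype ι] [DecidableEq ι]
    (c : ι → 𝕜) (g : ι → E) (j : ι) :
    ∑ i, (c - Pi.single j 1 : ι → 𝕜) i • g i = ∑ i, c i • g i - g j := by
  simp [sub_smul, Pi.single_apply, ite_smul]

theorem sub_single_nonneg [Ring 𝕜] [PartialOrder 𝕜] [IsOrderedRing 𝕜] [DecidableEq ι]
    {c : ι → 𝕜} (hc : ∀ i, 0 ≤ c i) {j : ι} (hj : 1 ≤ c j) (i : ι) :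
    0 ≤ (c - Pi.single j 1 : ι → 𝕜) i := by
  rcases eq_or_ne i j with rfl | hi
  · simpa using hj
  · simpa [hi] using hc i

theorem sum_smul_update_eq [Field 𝕜] [AddCommGroup E] [Module 𝕜 E] [Fintype ι] [DecidableEq ι]
    (g : ι → E) (c : ι → 𝕜) (j₀ : ι) (h : c j₀ ≠ 1) :
    ∑ j, (if j = j₀ then c j₀ / (1 - c j₀) else (c j - c j₀) / (1 - c j₀)) •
      Function.update g j₀ (∑ k, (1 - c k) • g k) j = ∑ j, c j • g j := by
  set a := (1 - c j₀)⁻¹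
  have ha : a * (1 - c j₀) = 1 := inv_mul_cancel₀ (sub_ne_zero.2 h.symm)
  have hpt : ∀ j, (if j = j₀ then c j₀ / (1 - c j₀) else (c j - c j₀) / (1 - c j₀)) •
      Function.update g j₀ (∑ k, (1 - c k) • g k) j =
      (a * (c j - c j₀)) • g j + (Pi.single j₀ ((a * c j₀) • ∑ k, (1 - c k) • g k) : ι → E) j := by
    intro j
    rcases eq_or_ne j j₀ with rfl | hj
    · simp [a, div_eq_inv_mul]
    · simp [hj, a, div_eq_inv_mul]
  rw [Finset.sum_congr rfl fun j _ => hpt j, Finset.sum_add_distrib, Finset.sum_pi_single']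
  simp only [Finset.mem_univ, if_true, mul_sub, sub_smul, Finset.sum_sub_distrib, mul_smul,
    ← Finset.smul_sum, one_smul]
  linear_combination (norm := module) ha • ∑ j, c j • g j

theorem Convex.mem_smul_of_eq_sum [Field 𝕜] [LinearOrder 𝕜] [IsStrictOrderedRing 𝕜]
    [AddCommGroup E] [Module 𝕜 E] [Fintype ι] {S : Set E} (hS : Convex 𝕜 S) {r : 𝕜} (hr : 0 < r)
    {y : E} {x : ι → E} {c : ι → 𝕜} (hx : ∀ j, x j ∈ S) (hc : ∀ j, 0 ≤ c j)
    (h : (r, y) = ∑ j, c j • ((1 : 𝕜), x j)) : y ∈ r • S := by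
  simp only [Prod.ext_iff, Prod.fst_sum, Prod.snd_sum, Prod.smul_fst, Prod.smul_snd, smul_eq_mul,
    mul_one] at h
  refine ⟨∑ j, (r⁻¹ * c j) • x j, hS.sum_mem (fun j _ => mul_nonneg (inv_nonneg.2 hr.le) (hc j))
    ?_ fun j _ => hx j, ?_⟩
  · rw [← Finset.mul_sum, ← h.1, inv_mul_cancel₀ hr.ne']
  · simp only [h.2, Finset.smul_sum, smul_smul, mul_inv_cancel_left₀ hr.ne']

end FiniteCombinations

theorem natAbs_lt_natAbs_of_cast_eq_mul {a b : ℤ} {t : ℚ} (h : (a : ℚ) = t * b) (ht₀ : 0 < t)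
    (ht₁ : t < 1) (hb : b ≠ 0) : a.natAbs < b.natAbs := by
  have : |(a : ℚ)| < |(b : ℚ)| := by
    rw [h, abs_mul, abs_of_pos ht₀]
    exact mul_lt_of_lt_one_left (abs_pos.2 (Int.cast_ne_zero.2 hb)) ht₁
  rwa [← Int.cast_abs, ← Int.cast_abs, Int.cast_lt, Int.abs_eq_natAbs, Int.abs_eq_natAbs,
    Nat.cast_lt] at this

namespace Paper

theorem Lq_add {d : ℕ} (a b : Fin d → ℤ) : Lq (a + b) = Lq a + Lq b := by
  ext; simp [Lq]

theorem Lq_sub {d : ℕ} (a b : Fin d → ℤ) : Lq (a - b) = Lq a - Lq b := by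
  ext; simp [Lq]

theorem Lq_sum {d : ℕ} {κ : Type*} (s : Finset κ) (v : κ → Fin d → ℤ) :
    Lq (∑ j ∈ s, v j) = ∑ j ∈ s, Lq (v j) := by
  ext; simp [Lq, Finset.sum_apply]

theorem Lq_injective {d : ℕ} : Function.Injective (Lq (n := d)) := fun a b h =>
  funext fun i => by simpa [Lq] using congrFun h i

section Simplex

variable {n : ℕ}

def homMatrix (v : Fin (n + 2) → Fin (n + 1) → ℤ) : Matrix (Fin (n + 2)) (Fin (n + 2)) ℤ :=
  Matrix.of fun j => Fin.cons 1 (v j)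

theorem homMatrix_det_cast (v : Fin (n + 2) → Fin (n + 1) → ℤ) :
    ((homMatrix v).det : ℚ) =
      (Matrix.of fun j => Fin.consLinearEquiv ℚ (fun _ => ℚ) ((1 : ℚ), Lq (v j))).det := by
  rw [show ((homMatrix v).det : ℚ) = Int.castRingHom ℚ (homMatrix v).det from rfl,
    RingHom.map_det]
  congr 1
  ext j k
  cases k using Fin.cases <;> simp [homMatrix, Lq]

theorem homMatrix_det_ne_zero {v : Fin (n + 2) → Fin (n + 1) → ℤ}
    (h : LinearIndependent ℚ fun j => ((1 : ℚ), Lq (v j))) : (homMatrix v).det ≠ 0 := by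
  rw [← Int.cast_ne_zero (α := ℚ), homMatrix_det_cast]
  refine ((Matrix.isUnit_iff_isUnit_det _).1
    (Matrix.linearIndependent_rows_iff_isUnit.1 ?_)).ne_zero
  exact h.map' (Fin.consLinearEquiv ℚ fun _ : Fin (n + 2) => ℚ).toLinearMap (LinearEquiv.ker _)

theorem homMatrix_update_det (v : Fin (n + 2) → Fin (n + 1) → ℤ) (j₀ : Fin (n + 2))
    (u : Fin (n + 1) → ℤ) (a : Fin (n + 2) → ℚ)
    (hu : ((1 : ℚ), Lq u) = ∑ k, a k • ((1 : ℚ), Lq (v k))) :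
    ((homMatrix (Function.update v j₀ u)).det : ℚ) = a j₀ * (homMatrix v).det := by
  have := Matrix.det_updateRow_sum
    (Matrix.of fun j => Fin.consLinearEquiv ℚ (fun _ => ℚ) ((1 : ℚ), Lq (v j))) j₀ a
  rw [homMatrix_det_cast, homMatrix_det_cast, ← smul_eq_mul, ← this]
  congr 1
  funext j
  rcases eq_or_ne j j₀ with rfl | hj
  · rw [Matrix.updateRow_self]
    show Fin.consLinearEquiv ℚ (fun _ : Fin (n + 2) => ℚ)
      ((1 : ℚ), Lq (Function.update v j u j)) = _
    rw [Function.update_self, hu, map_sum]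
    simp only [map_smul]
    rfl
  · rw [Matrix.updateRow_ne hj]
    show Fin.consLinearEquiv ℚ (fun _ : Fin (n + 2) => ℚ)
      ((1 : ℚ), Lq (Function.update v j₀ u j)) = _
    rw [Function.update_of_ne hj]
    rfl

theorem one_sub_coeff_repr {m : Fin (n + 1) → ℤ} {v : Fin (n + 2) → Fin (n + 1) → ℤ}
    {c : Fin (n + 2) → ℚ} (hm : ((n : ℚ) + 1, Lq m) = ∑ j, c j • ((1 : ℚ), Lq (v j))) :
    ((1 : ℚ), Lq (∑ j, v j - m)) = ∑ j, (1 - c j) • ((1 : ℚ), Lq (v j)) := by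
  simp only [sub_smul, one_smul, Finset.sum_sub_distrib, ← hm, Lq_sub, Lq_sum]
  ext
  · simp [Prod.fst_sum]
    ring
  · simp [Prod.snd_sum]

theorem exists_homMatrix_natAbs_det_lt {S : Set (Fin (n + 1) → ℚ)} (hS : Convex ℚ S)
    {m : Fin (n + 1) → ℤ} {v : Fin (n + 2) → Fin (n + 1) → ℤ} {c : Fin (n + 2) → ℚ}
    (hv : ∀ j, Lq (v j) ∈ S) (hc₁ : ∀ j, c j < 1)
    (hm : ((n : ℚ) + 1, Lq m) = ∑ j, c j • ((1 : ℚ), Lq (v j)))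
    (hdet : (homMatrix v).det ≠ 0) :
    ∃ (v' : Fin (n + 2) → Fin (n + 1) → ℤ) (c' : Fin (n + 2) → ℚ), (∀ j, Lq (v' j) ∈ S) ∧
      (∀ j, 0 ≤ c' j) ∧ ((n : ℚ) + 1, Lq m) = ∑ j, c' j • ((1 : ℚ), Lq (v' j)) ∧
      (homMatrix v').det ≠ 0 ∧ (homMatrix v').det.natAbs < (homMatrix v).det.natAbs := by
  set r : Fin (n + 2) → ℚ × (Fin (n + 1) → ℚ) := fun j => (1, Lq (v j))
  set u := ∑ j, v j - m
  have hu : ((1 : ℚ), Lq u) = ∑ j, (1 - c j) • r j := one_sub_coeff_repr hm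
  have huS : Lq u ∈ S := by
    simpa using hS.mem_smul_of_eq_sum one_pos hv (fun j => by linarith [hc₁ j]) hu
  obtain ⟨j₀, -, hmin⟩ := Finset.exists_min_image Finset.univ c Finset.univ_nonempty
  have hpos : 0 < c j₀ := by
    have hsum : ∑ j, (1 - c j) = 1 := by
      simpa [Prod.fst_sum, r] using (congrArg Prod.fst hu).symm
    obtain ⟨j₁, hj₁⟩ := exists_ne j₀
    have := Finset.single_lt_sum (f := fun j => 1 - c j) hj₁ (Finset.mem_univ j₀)
      (Finset.mem_univ j₁) (by linarith [hc₁ j₁]) (fun k _ _ => by linarith [hc₁ k])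
    linarith
  have hr' : (fun j => ((1 : ℚ), Lq (Function.update v j₀ u j))) =
      Function.update r j₀ (∑ k, (1 - c k) • r k) := by
    funext j
    rcases eq_or_ne j j₀ with rfl | hj
    · simp [hu]
    · simp [hj, r]
  have hdet' := homMatrix_update_det v j₀ u _ hu
  have hc₀ : 0 < 1 - c j₀ := by linarith [hc₁ j₀]
  refine ⟨Function.update v j₀ u, fun j => if j = j₀ then c j₀ / (1 - c j₀) else
    (c j - c j₀) / (1 - c j₀), fun j => ?_, fun j => ?_, ?_, ?_,
    natAbs_lt_natAbs_of_cast_eq_mul hdet' hc₀ (by linarith) hdet⟩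
  · rcases eq_or_ne j j₀ with rfl | hj
    · simpa using huS
    · simpa [hj] using hv j
  · dsimp only
    split_ifs
    · positivity
    · exact div_nonneg (by linarith [hmin j (Finset.mem_univ j)]) hc₀.le
  · have := sum_smul_update_eq r c j₀ (hc₁ j₀).ne
    rw [← hr'] at this
    exact hm.trans this.symm
  · rw [← Int.cast_ne_zero (α := ℚ), hdet']
    exact mul_ne_zero hc₀.ne' (Int.cast_ne_zero.2 hdet)

theorem exists_coeff_ge_one {S : Set (Fin (n + 1) → ℚ)} (hS : Convex ℚ S)
    {m : Fin (n + 1) → ℤ} {v : Fin (n + 2) → Fin (n + 1) → ℤ} {c : Fin (n + 2) → ℚ}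
    (hv : ∀ j, Lq (v j) ∈ S) (hc : ∀ j, 0 ≤ c j)
    (hm : ((n : ℚ) + 1, Lq m) = ∑ j, c j • ((1 : ℚ), Lq (v j)))
    (hdet : (homMatrix v).det ≠ 0) :
    ∃ (v' : Fin (n + 2) → Fin (n + 1) → ℤ) (c' : Fin (n + 2) → ℚ), (∀ j, Lq (v' j) ∈ S) ∧
      (∀ j, 0 ≤ c' j) ∧ ((n : ℚ) + 1, Lq m) = ∑ j, c' j • ((1 : ℚ), Lq (v' j)) ∧
      ∃ j, 1 ≤ c' j := by
  induction hN : (homMatrix v).det.natAbs using Nat.strong_induction_on generalizing v c with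
  | _ N ih =>
    by_cases hbig : ∃ j, 1 ≤ c j
    · exact ⟨v, c, hv, hc, hm, hbig⟩
    push Not at hbig
    obtain ⟨v', c', hv', hc', hm', hdet', hlt⟩ := exists_homMatrix_natAbs_det_lt hS hv hbig hm hdet
    exact ih _ (hN ▸ hlt) hv' hc' hm' hdet' rfl

end Simplex

theorem mink_eq_smul {d : ℕ} {σv P : Set (Fin d → ℚ)} (hP : Convex ℚ P) :
    ∀ s : ℕ, 1 ≤ s → mink σv P s = (s : ℚ) • P
  | 1, _ => by simp [mink]
  | s + 2, _ => by
    rw [mink, mink_eq_smul hP (s + 1) (by omega)]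
    calc ((s + 1 : ℕ) : ℚ) • P + P = ((s + 1 : ℕ) : ℚ) • P + (1 : ℚ) • P := by rw [one_smul]
      _ = ((s + 2 : ℕ) : ℚ) • P := by
        rw [← hP.add_smul (by positivity) zero_le_one]
        push_cast
        ring_nf

theorem sum_mem_mink {d : ℕ} {σv P : Set (Fin d → ℚ)} :
    ∀ s : ℕ, 1 ≤ s → ∀ f : Fin s → Fin d → ℤ, (∀ i, Lq (f i) ∈ P) →
      Lq (∑ i, f i) ∈ mink σv P s
  | 1, _, f, hf => by simpa [mink] using hf 0
  | s + 2, _, f, hf => by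
    rw [mink, Fin.sum_univ_castSucc, Lq_add]
    exact Set.add_mem_add (sum_mem_mink (s + 1) (by omega) _ fun i => hf _) (hf _)

section IntegralPolyhedron

variable {n : ℕ} {F : Finset (Fin (n + 1) → ℤ)} {P : Set (Fin (n + 1) → ℚ)}

def coneGen (F : Finset (Fin (n + 1) → ℤ)) : F ⊕ Fin (n + 1) → ℚ × (Fin (n + 1) → ℚ) :=
  Sum.elim (fun f => (1, Lq f)) (fun i => (0, Pi.single i 1))

theorem sum_smul_coneGen (c : F ⊕ Fin (n + 1) → ℚ) :
    ∑ i, c i • coneGen F i =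
      (∑ f, c (.inl f), ∑ f, c (.inl f) • Lq (f : Fin (n + 1) → ℤ) + fun i => c (.inr i)) := by
  ext
  · simp [coneGen, Fintype.sum_sum_type, Prod.fst_sum]
  · simp [coneGen, Fintype.sum_sum_type, Prod.snd_sum, Finset.sum_apply, Pi.single_apply]

theorem mem_smul_iff_exists_coneGen (hPF : P = convexHull ℚ (Lq '' F) + orthant n) {r : ℚ}
    (hr : 0 < r) {y : Fin (n + 1) → ℚ} :
    y ∈ r • P ↔ ∃ c : F ⊕ Fin (n + 1) → ℚ, (∀ i, 0 ≤ c i) ∧ (r, y) = ∑ i, c i • coneGen F i := by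
  subst hPF
  simp only [sum_smul_coneGen, Prod.mk.injEq]
  constructor
  · rintro ⟨_, ⟨p, hp, w, hw, rfl⟩, rfl⟩
    rw [← Finset.coe_image, Finset.mem_convexHull'] at hp
    obtain ⟨a, ha, ha₁, rfl⟩ := hp
    rw [Finset.sum_image Lq_injective.injOn, ← Finset.sum_coe_sort] at ha₁ ⊢
    refine ⟨Sum.elim (fun f => r * a (Lq f)) (fun i => r * w i), ?_, ?_, ?_⟩
    · rintro (f | i)
      · exact mul_nonneg hr.le (ha _ (Finset.mem_image_of_mem _ f.2))
      · exact mul_nonneg hr.le (hw i)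
    · simp only [Sum.elim_inl, ← Finset.mul_sum, ha₁, mul_one]
    · ext i
      simp [Finset.sum_apply, mul_add, Finset.mul_sum, mul_assoc]
  · rintro ⟨c, hc, hrc, rfl⟩
    have hr₀ : 0 ≤ r⁻¹ := inv_nonneg.2 hr.le
    refine ⟨∑ f, (r⁻¹ * c (.inl f)) • Lq (f : Fin (n + 1) → ℤ) + r⁻¹ • fun i => c (.inr i),
      Set.add_mem_add ?_ fun i => mul_nonneg hr₀ (hc _), ?_⟩
    · refine mem_convexHull_of_exists_fintype _ _ (fun f => mul_nonneg hr₀ (hc _)) ?_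
        (fun f => Set.mem_image_of_mem _ f.2) rfl
      rw [← Finset.mul_sum, ← hrc, inv_mul_cancel₀ hr.ne']
    · simp only [smul_add, Finset.smul_sum, smul_smul, mul_inv_cancel_left₀ hr.ne',
        mul_inv_cancel₀ hr.ne', one_smul]

theorem card_support_inl_of_coeff_lt_one {s : ℕ} (hs : n ≤ s) {c : F ⊕ Fin (n + 1) → ℚ}
    (hind : LinearIndepOn ℚ (coneGen F) (Function.support c))
    (hsum : ∑ f, c (.inl f) = s + 1) (hc₁ : ∀ f, c (.inl f) < 1) :
    s = n ∧ (Finset.univ.filter fun f : F => c (.inl f) ≠ 0).card = n + 2 ∧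
      ∀ i, c (.inr i) = 0 := by
  classical
  set J := Finset.univ.filter fun f : F => c (.inl f) ≠ 0
  set K := Finset.univ.filter fun i : Fin (n + 1) => c (.inr i) ≠ 0
  have hJK : J.card + K.card ≤ n + 2 := by
    have hsupp : J.disjSum K = (Function.support c).toFinset := by
      ext (f | i) <;> simp [J, K]
    have := hind.fintype_card_le_finrank
    rw [← Set.toFinset_card, ← hsupp, Finset.card_disjSum] at this
    simp only [Module.finrank_prod, Module.finrank_self, Module.finrank_fin_fun] at this
    omega
  have hJsum : ∑ f ∈ J, c (.inl f) = s + 1 := by rw [Finset.sum_filter_ne_zero, hsum]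
  have hJ : s + 1 < J.card := by
    have hJne : J.Nonempty := Finset.nonempty_of_sum_ne_zero (by rw [hJsum]; positivity)
    have : (s : ℚ) + 1 < J.card := calc
      (s : ℚ) + 1 = ∑ f ∈ J, c (.inl f) := hJsum.symm
      _ < ∑ f ∈ J, (1 : ℚ) := Finset.sum_lt_sum_of_nonempty hJne fun f _ => hc₁ f
      _ = J.card := by simp
    exact_mod_cast this
  have hK : K.card = 0 := by omega
  exact ⟨by omega, by omega, by simpa [K, Finset.filter_eq_empty_iff] using hK⟩

theorem exists_simplex_of_coeff_lt_one {s : ℕ} (hs : n ≤ s) {m : Fin (n + 1) → ℤ}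
    {c : F ⊕ Fin (n + 1) → ℚ} (hc : ∀ i, 0 ≤ c i)
    (hind : LinearIndepOn ℚ (coneGen F) (Function.support c))
    (hm : ((s : ℚ) + 1, Lq m) = ∑ i, c i • coneGen F i) (hc₁ : ∀ f, c (.inl f) < 1) :
    s = n ∧ ∃ (v : Fin (n + 2) → Fin (n + 1) → ℤ) (c' : Fin (n + 2) → ℚ), (∀ j, v j ∈ F) ∧
      (∀ j, 0 ≤ c' j) ∧ ((n : ℚ) + 1, Lq m) = ∑ j, c' j • ((1 : ℚ), Lq (v j)) ∧
      (homMatrix v).det ≠ 0 := by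
  rw [sum_smul_coneGen, Prod.mk.injEq] at hm
  obtain ⟨rfl, hJcard, hK⟩ := card_support_inl_of_coeff_lt_one hs hind hm.1.symm hc₁
  set J := Finset.univ.filter fun f : F => c (.inl f) ≠ 0
  set e := (J.equivFinOfCardEq hJcard).symm
  refine ⟨rfl, fun j => (e j : F), fun j => c (.inl (e j)), fun j => (e j : F).2, fun j => hc _,
    ?_, homMatrix_det_ne_zero (hind.comp (fun j => ⟨.inl (e j), (Finset.mem_filter.1 (e j).2).2⟩)
      fun j k h => e.injective (Subtype.ext (Sum.inl_injective (congrArg Subtype.val h))))⟩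
  have hreindex : ∀ g : F → ℚ × (Fin (s + 1) → ℚ), (∀ f, c (.inl f) = 0 → g f = 0) →
      ∑ j, g (e j) = ∑ f, g f := fun g hg => by
    rw [e.sum_comp (fun x : J => g x), Finset.sum_coe_sort J g]
    exact Finset.sum_filter_of_ne fun f _ => mt (hg f)
  rw [hreindex (fun f => c (.inl f) • ((1 : ℚ), Lq (f : Fin (s + 1) → ℤ))) fun f hf => by simp [hf]]
  ext
  · simp [Prod.fst_sum, hm.1]
  · simp [Prod.snd_sum, hm.2, hK]

theorem convex_orthant : Convex ℚ (orthant n) := fun _ hx _ hy _ _ ha hb _ i =>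
  add_nonneg (mul_nonneg ha (hx i)) (mul_nonneg hb (hy i))

theorem convex_convexHull_add_orthant (S : Set (Fin (n + 1) → ℚ)) :
    Convex ℚ (convexHull ℚ S + orthant n) :=
  (convex_convexHull ℚ S).add convex_orthant

theorem exists_sub_mem_smul (hPF : P = convexHull ℚ (Lq '' F) + orthant n) {s : ℕ} (hns : n ≤ s)
    (hs : 0 < s) {m : Fin (n + 1) → ℤ} (hm : Lq m ∈ ((s : ℚ) + 1) • P) :
    ∃ x, Lq x ∈ P ∧ Lq (m - x) ∈ (s : ℚ) • P := by
  have hP : Convex ℚ P := hPF ▸ convex_convexHull_add_orthant _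
  have hFP : ∀ f ∈ F, Lq f ∈ P := fun f hf => hPF ▸
    ⟨Lq f, subset_convexHull ℚ _ (Set.mem_image_of_mem _ hf), 0, fun _ => le_rfl, add_zero _⟩
  obtain ⟨c₀, hc₀, hm₀⟩ := (mem_smul_iff_exists_coneGen hPF (by positivity)).1 hm
  obtain ⟨c, hc, hsum, hind⟩ := exists_nonneg_linearIndepOn_support (coneGen F) c₀ hc₀
  rw [← hsum] at hm₀
  by_cases hbig : ∃ f, 1 ≤ c (.inl f)
  · obtain ⟨f, hf⟩ := hbig
    refine ⟨f, hFP f f.2, (mem_smul_iff_exists_coneGen hPF (by positivity)).2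
      ⟨c - Pi.single (.inl f) 1, sub_single_nonneg hc hf, ?_⟩⟩
    rw [sum_sub_single_smul, ← hm₀, Lq_sub]
    simp [coneGen]
  · push Not at hbig
    obtain ⟨rfl, v, a, hvF, ha, hma, hdet⟩ :=
      exists_simplex_of_coeff_lt_one hns hc hind hm₀ hbig
    obtain ⟨w, b, hwP, hb, hmb, j, hj⟩ :=
      exists_coeff_ge_one hP (fun j => hFP _ (hvF j)) ha hma hdet
    refine ⟨w j, hwP j, hP.mem_smul_of_eq_sum (by positivity) hwP (sub_single_nonneg hb hj) ?_⟩
    rw [sum_sub_single_smul, ← hmb, Lq_sub]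
    simp

theorem exists_sum_of_mem_mink (hPF : P = convexHull ℚ (Lq '' F) + orthant n)
    (h : ∀ s : ℕ, 1 ≤ s → s ≤ n → ∀ m : Fin (n + 1) → ℤ, Lq m ∈ mink (orthant n) P s →
      ∃ f : Fin s → Fin (n + 1) → ℤ, (∀ i, Lq (f i) ∈ P) ∧ m = ∑ i, f i) :
    ∀ s : ℕ, 1 ≤ s → ∀ m : Fin (n + 1) → ℤ, Lq m ∈ mink (orthant n) P s →
      ∃ f : Fin s → Fin (n + 1) → ℤ, (∀ i, Lq (f i) ∈ P) ∧ m = ∑ i, f i := by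
  intro s
  induction s using Nat.strong_induction_on with
  | _ s ih =>
    intro hs m hm
    by_cases hsn : s ≤ n
    · exact h s hs hsn m hm
    obtain ⟨t, rfl⟩ : ∃ t, s = t + 1 := ⟨s - 1, by omega⟩
    rcases Nat.eq_zero_or_pos t with rfl | ht
    · exact ⟨fun _ => m, fun _ => by simpa [mink] using hm, by simp⟩
    have hP : Convex ℚ P := hPF ▸ convex_convexHull_add_orthant _
    rw [mink_eq_smul hP _ hs, Nat.cast_succ] at hm
    obtain ⟨x, hx, hmx⟩ := exists_sub_mem_smul hPF (by omega) ht hm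
    obtain ⟨f, hf, hsum⟩ := ih t (by omega) ht (m - x) (by rwa [mink_eq_smul hP t ht])
    refine ⟨Fin.snoc f x, Fin.lastCases (by simpa using hx) fun i => by simpa using hf i, ?_⟩
    simp [Fin.sum_univ_castSucc, ← hsum]

end IntegralPolyhedron

theorem statement15_general {n : ℕ} (P : Set (Fin (n + 1) → ℚ))
    (hP : IsIntegralPoly (orthant n) P) :
    (∀ s : ℕ, 1 ≤ s → ∀ m : Fin (n + 1) → ℤ,
        Lq m ∈ mink (orthant n) P s ↔
          ∃ f : Fin s → (Fin (n + 1) → ℤ), (∀ i, Lq (f i) ∈ P) ∧ m = ∑ i, f i) ↔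
    (∀ s : ℕ, 1 ≤ s → s ≤ n → ∀ m : Fin (n + 1) → ℤ,
        Lq m ∈ mink (orthant n) P s ↔
          ∃ f : Fin s → (Fin (n + 1) → ℤ), (∀ i, Lq (f i) ∈ P) ∧ m = ∑ i, f i) := by
  obtain ⟨F, -, hPF⟩ := hP
  refine ⟨fun h s hs _ => h s hs, fun h s hs m => ⟨fun hm => ?_, ?_⟩⟩
  · exact exists_sum_of_mem_mink hPF (fun s hs hsn m => (h s hs hsn m).1) s hs m hm
  · rintro ⟨f, hf, rfl⟩
    exact sum_mem_mink s hs f hf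

/-- for `σ∨ = ℚ^{n+1}_{≥0}` and `P` an integral `σ∨`-polyhedron contained in
`σ∨`, `P` is normal iff `(sP) ∩ ℤ^{n+1} = E_{[s,P]}` for all `s ∈ {1, …, n}`: checking the
normality condition for the first `n` dilates suffices (Reid–Roberts–Vitulli criterion). -/
theorem statement15 {n : ℕ} (P : Set (Fin (n + 1) → ℚ))
    (hP : IsIntegralPoly (orthant n) P) (hPsub : P ⊆ orthant n) :
    (∀ s : ℕ, 1 ≤ s → ∀ m : Fin (n + 1) → ℤ,
        Lq m ∈ mink (orthant n) P s ↔
          ∃ f : Fin s → (Fin (n + 1) → ℤ), (∀ i, Lq (f i) ∈ P) ∧ m = ∑ i, f i) ↔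
    (∀ s : ℕ, 1 ≤ s → s ≤ n → ∀ m : Fin (n + 1) → ℤ,
        Lq m ∈ mink (orthant n) P s ↔
          ∃ f : Fin s → (Fin (n + 1) → ℤ), (∀ i, Lq (f i) ∈ P) ∧ m = ∑ i, f i) :=
  statement15_general P hP

end Paper
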